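/- arXiv:math/9909064 — 2 statements merged into one kernel-verified Lean document; each statement's English description precedes it below -/
import Mathlib

section
/- For all real parameters α, β, γ, the bracket {·,·}_{**} on ℝ⁴ satisfies the Jacobi identity: for all smooth f,g,h: ℝ⁴ → ℝ, {f,{g,h}_{**}}_{**} + {g,{h,f}_{**}}_{**} + {h,{f,g}_{**}}_{**} = 0; hence {·,·}_{**} is a Poisson bracket. -/
/-- The `i`-th partial derivative of `f : ℝⁿ → ℝ` at `v`. -/
noncomputable def pd {n : ℕ} (i : Fin n) (f : (Fin n → ℝ) → ℝ) (v : Fin n → ℝ) : ℝ :=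
  fderiv ℝ f v (Pi.single i 1)

variable {n : ℕ} {f g : (Fin n → ℝ) → ℝ} {v : Fin n → ℝ} {i j : Fin n} {c : ℝ}

lemma pd_contDiff (i : Fin n) (hf : ContDiff ℝ (⊤ : ℕ∞) f) : ContDiff ℝ (⊤ : ℕ∞) (pd i f) :=
  (hf.fderiv_right (by simp)).clm_apply contDiff_const

lemma pd_add (hf : DifferentiableAt ℝ f v) (hg : DifferentiableAt ℝ g v) :
    pd i (fun w => f w + g w) v = pd i f v + pd i g v := by
  unfold pd; rw [fderiv_fun_add hf hg]; rfl

lemma pd_sub (hf : DifferentiableAt ℝ f v) (hg : DifferentiableAt ℝ g v) :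
    pd i (fun w => f w - g w) v = pd i f v - pd i g v := by
  unfold pd; rw [fderiv_fun_sub hf hg]; rfl

lemma pd_mul (hf : DifferentiableAt ℝ f v) (hg : DifferentiableAt ℝ g v) :
    pd i (fun w => f w * g w) v = pd i f v * g v + f v * pd i g v := by
  unfold pd; rw [fderiv_fun_mul hf hg]; simp; ring

lemma pd_const : pd i (fun _ : Fin n → ℝ => c) v = 0 := by
  unfold pd; simp

lemma pd_coord : pd i (fun w : Fin n → ℝ => w j) v = if j = i then 1 else 0 := by
  unfold pd
  have : (fun w : Fin n → ℝ => w j) = (ContinuousLinearMap.proj (R := ℝ) (φ := fun _ : Fin n => ℝ) j) := rfl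
  rw [this, ContinuousLinearMap.fderiv]
  simp [Pi.single_apply]

lemma pd_comm (hf : ContDiff ℝ (⊤ : ℕ∞) f) (i j : Fin n) (v) :
    pd i (pd j f) v = pd j (pd i f) v := by
  have hd : ∀ x, HasFDerivAt f (fderiv ℝ f x) x := fun x =>
    (hf.differentiable (by simp) x).hasFDerivAt
  have hD : HasFDerivAt (fderiv ℝ f) (fderiv ℝ (fderiv ℝ f) v) v :=
    (((hf.fderiv_right (m := (⊤ : ℕ∞)) (by simp)).differentiable (by simp)) v).hasFDerivAt
  have key := second_derivative_symmetric hd hD (Pi.single i 1) (Pi.single j 1)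
  have e : ∀ (k l : Fin n),
      pd k (pd l f) v = fderiv ℝ (fderiv ℝ f) v (Pi.single k 1) (Pi.single l 1) := by
    intro k l
    unfold pd
    rw [fderiv_clm_apply ((hf.fderiv_right (m := (⊤ : ℕ∞)) (by simp)).differentiable (by simp) v)
      (differentiableAt_const _)]
    simp
  rw [e, e, key]


/-- The bracket `{·,·}_{**}` on `ℝ⁴` with coordinates
`(a,b,x,y) = (v 0, v 1, v 2, v 3)`, determined on coordinate functions by
`{x,a} = βya`, `{x,b} = −βyb`, `{y,a} = −αxa`, `{y,b} = αxb`, `{a,b} = 0`,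
`{x,y} = γ(b² − a²)`. -/
noncomputable def ssBr (α β γ : ℝ) (f g : (Fin 4 → ℝ) → ℝ) (v : Fin 4 → ℝ) : ℝ :=
  β * v 3 * v 0 * (pd 2 f v * pd 0 g v - pd 0 f v * pd 2 g v)
  - β * v 3 * v 1 * (pd 2 f v * pd 1 g v - pd 1 f v * pd 2 g v)
  - α * v 2 * v 0 * (pd 3 f v * pd 0 g v - pd 0 f v * pd 3 g v)
  + α * v 2 * v 1 * (pd 3 f v * pd 1 g v - pd 1 f v * pd 3 g v)
  + γ * (v 1 ^ 2 - v 0 ^ 2) * (pd 2 f v * pd 3 g v - pd 3 f v * pd 2 g v)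


set_option maxHeartbeats 2000000 in
lemma pd_ssBr (α β γ : ℝ) {p q : (Fin 4 → ℝ) → ℝ} (hp : ContDiff ℝ (⊤ : ℕ∞) p)
    (hq : ContDiff ℝ (⊤ : ℕ∞) q) (i : Fin 4) (v : Fin 4 → ℝ) :
    pd i (ssBr α β γ p q) v =
      β * ((if (3:Fin 4) = i then (1:ℝ) else 0) * v 0 + v 3 * (if (0:Fin 4) = i then (1:ℝ) else 0)) * (pd 2 p v * pd 0 q v - pd 0 p v * pd 2 q v)
      + β * v 3 * v 0 * (pd i (pd 2 p) v * pd 0 q v + pd 2 p v * pd i (pd 0 q) v - pd i (pd 0 p) v * pd 2 q v - pd 0 p v * pd i (pd 2 q) v)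
      - β * ((if (3:Fin 4) = i then (1:ℝ) else 0) * v 1 + v 3 * (if (1:Fin 4) = i then (1:ℝ) else 0)) * (pd 2 p v * pd 1 q v - pd 1 p v * pd 2 q v)
      - β * v 3 * v 1 * (pd i (pd 2 p) v * pd 1 q v + pd 2 p v * pd i (pd 1 q) v - pd i (pd 1 p) v * pd 2 q v - pd 1 p v * pd i (pd 2 q) v)
      - α * ((if (2:Fin 4) = i then (1:ℝ) else 0) * v 0 + v 2 * (if (0:Fin 4) = i then (1:ℝ) else 0)) * (pd 3 p v * pd 0 q v - pd 0 p v * pd 3 q v)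
      - α * v 2 * v 0 * (pd i (pd 3 p) v * pd 0 q v + pd 3 p v * pd i (pd 0 q) v - pd i (pd 0 p) v * pd 3 q v - pd 0 p v * pd i (pd 3 q) v)
      + α * ((if (2:Fin 4) = i then (1:ℝ) else 0) * v 1 + v 2 * (if (1:Fin 4) = i then (1:ℝ) else 0)) * (pd 3 p v * pd 1 q v - pd 1 p v * pd 3 q v)
      + α * v 2 * v 1 * (pd i (pd 3 p) v * pd 1 q v + pd 3 p v * pd i (pd 1 q) v - pd i (pd 1 p) v * pd 3 q v - pd 1 p v * pd i (pd 3 q) v)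
      + γ * (2 * v 1 * (if (1:Fin 4) = i then (1:ℝ) else 0) - 2 * v 0 * (if (0:Fin 4) = i then (1:ℝ) else 0)) * (pd 2 p v * pd 3 q v - pd 3 p v * pd 2 q v)
      + γ * (v 1 * v 1 - v 0 * v 0) * (pd i (pd 2 p) v * pd 3 q v + pd 2 p v * pd i (pd 3 q) v - pd i (pd 3 p) v * pd 2 q v - pd 3 p v * pd i (pd 2 q) v) := by
  have Dp0 := (pd_contDiff (0:Fin 4) hp).differentiable (by simp)
  have Dp1 := (pd_contDiff (1:Fin 4) hp).differentiable (by simp)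
  have Dp2 := (pd_contDiff (2:Fin 4) hp).differentiable (by simp)
  have Dp3 := (pd_contDiff (3:Fin 4) hp).differentiable (by simp)
  have Dq0 := (pd_contDiff (0:Fin 4) hq).differentiable (by simp)
  have Dq1 := (pd_contDiff (1:Fin 4) hq).differentiable (by simp)
  have Dq2 := (pd_contDiff (2:Fin 4) hq).differentiable (by simp)
  have Dq3 := (pd_contDiff (3:Fin 4) hq).differentiable (by simp)
  have hd : ssBr α β γ p q = fun w =>
      β * w 3 * w 0 * (pd 2 p w * pd 0 q w - pd 0 p w * pd 2 q w)
      - β * w 3 * w 1 * (pd 2 p w * pd 1 q w - pd 1 p w * pd 2 q w)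
      - α * w 2 * w 0 * (pd 3 p w * pd 0 q w - pd 0 p w * pd 3 q w)
      + α * w 2 * w 1 * (pd 3 p w * pd 1 q w - pd 1 p w * pd 3 q w)
      + γ * (w 1 * w 1 - w 0 * w 0) * (pd 2 p w * pd 3 q w - pd 3 p w * pd 2 q w) := by
    funext w; simp only [ssBr]; ring
  rw [hd]
  simp (disch := fun_prop) only [pd_sub, pd_add, pd_mul, pd_const, pd_coord]
  ring

lemma pd_ssBr0 (α β γ : ℝ) {p q : (Fin 4 → ℝ) → ℝ} (hp : ContDiff ℝ (⊤ : ℕ∞) p)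
    (hq : ContDiff ℝ (⊤ : ℕ∞) q) (v : Fin 4 → ℝ) :
    pd 0 (ssBr α β γ p q) v =
      β * (v 3) * (pd 2 p v * pd 0 q v - pd 0 p v * pd 2 q v)
      + β * v 3 * v 0 * (pd 0 (pd 2 p) v * pd 0 q v + pd 2 p v * pd 0 (pd 0 q) v - pd 0 (pd 0 p) v * pd 2 q v - pd 0 p v * pd 0 (pd 2 q) v)
      - β * v 3 * v 1 * (pd 0 (pd 2 p) v * pd 1 q v + pd 2 p v * pd 0 (pd 1 q) v - pd 0 (pd 1 p) v * pd 2 q v - pd 1 p v * pd 0 (pd 2 q) v)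
      - α * (v 2) * (pd 3 p v * pd 0 q v - pd 0 p v * pd 3 q v)
      - α * v 2 * v 0 * (pd 0 (pd 3 p) v * pd 0 q v + pd 3 p v * pd 0 (pd 0 q) v - pd 0 (pd 0 p) v * pd 3 q v - pd 0 p v * pd 0 (pd 3 q) v)
      + α * v 2 * v 1 * (pd 0 (pd 3 p) v * pd 1 q v + pd 3 p v * pd 0 (pd 1 q) v - pd 0 (pd 1 p) v * pd 3 q v - pd 1 p v * pd 0 (pd 3 q) v)
      + γ * ((-2) * v 0) * (pd 2 p v * pd 3 q v - pd 3 p v * pd 2 q v)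
      + γ * (v 1 * v 1 - v 0 * v 0) * (pd 0 (pd 2 p) v * pd 3 q v + pd 2 p v * pd 0 (pd 3 q) v - pd 0 (pd 3 p) v * pd 2 q v - pd 3 p v * pd 0 (pd 2 q) v) := by
  rw [pd_ssBr α β γ hp hq 0 v]
  simp only [Fin.reduceEq, reduceIte, reduceCtorEq, if_true, if_false, pd_comm hp 1 0 v, pd_comm hp 2 0 v, pd_comm hp 3 0 v,
    pd_comm hp 2 1 v, pd_comm hp 3 1 v, pd_comm hp 3 2 v,
    pd_comm hq 1 0 v, pd_comm hq 2 0 v, pd_comm hq 3 0 v,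
    pd_comm hq 2 1 v, pd_comm hq 3 1 v, pd_comm hq 3 2 v]
  ring

lemma pd_ssBr1 (α β γ : ℝ) {p q : (Fin 4 → ℝ) → ℝ} (hp : ContDiff ℝ (⊤ : ℕ∞) p)
    (hq : ContDiff ℝ (⊤ : ℕ∞) q) (v : Fin 4 → ℝ) :
    pd 1 (ssBr α β γ p q) v =
      β * v 3 * v 0 * (pd 1 (pd 2 p) v * pd 0 q v + pd 2 p v * pd 0 (pd 1 q) v - pd 0 (pd 1 p) v * pd 2 q v - pd 0 p v * pd 1 (pd 2 q) v)
      - β * (v 3) * (pd 2 p v * pd 1 q v - pd 1 p v * pd 2 q v)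
      - β * v 3 * v 1 * (pd 1 (pd 2 p) v * pd 1 q v + pd 2 p v * pd 1 (pd 1 q) v - pd 1 (pd 1 p) v * pd 2 q v - pd 1 p v * pd 1 (pd 2 q) v)
      - α * v 2 * v 0 * (pd 1 (pd 3 p) v * pd 0 q v + pd 3 p v * pd 0 (pd 1 q) v - pd 0 (pd 1 p) v * pd 3 q v - pd 0 p v * pd 1 (pd 3 q) v)
      + α * (v 2) * (pd 3 p v * pd 1 q v - pd 1 p v * pd 3 q v)
      + α * v 2 * v 1 * (pd 1 (pd 3 p) v * pd 1 q v + pd 3 p v * pd 1 (pd 1 q) v - pd 1 (pd 1 p) v * pd 3 q v - pd 1 p v * pd 1 (pd 3 q) v)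
      + γ * (2 * v 1) * (pd 2 p v * pd 3 q v - pd 3 p v * pd 2 q v)
      + γ * (v 1 * v 1 - v 0 * v 0) * (pd 1 (pd 2 p) v * pd 3 q v + pd 2 p v * pd 1 (pd 3 q) v - pd 1 (pd 3 p) v * pd 2 q v - pd 3 p v * pd 1 (pd 2 q) v) := by
  rw [pd_ssBr α β γ hp hq 1 v]
  simp only [Fin.reduceEq, reduceIte, reduceCtorEq, if_true, if_false, pd_comm hp 1 0 v, pd_comm hp 2 0 v, pd_comm hp 3 0 v,
    pd_comm hp 2 1 v, pd_comm hp 3 1 v, pd_comm hp 3 2 v,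
    pd_comm hq 1 0 v, pd_comm hq 2 0 v, pd_comm hq 3 0 v,
    pd_comm hq 2 1 v, pd_comm hq 3 1 v, pd_comm hq 3 2 v]
  ring

lemma pd_ssBr2 (α β γ : ℝ) {p q : (Fin 4 → ℝ) → ℝ} (hp : ContDiff ℝ (⊤ : ℕ∞) p)
    (hq : ContDiff ℝ (⊤ : ℕ∞) q) (v : Fin 4 → ℝ) :
    pd 2 (ssBr α β γ p q) v =
      β * v 3 * v 0 * (pd 2 (pd 2 p) v * pd 0 q v + pd 2 p v * pd 0 (pd 2 q) v - pd 0 (pd 2 p) v * pd 2 q v - pd 0 p v * pd 2 (pd 2 q) v)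
      - β * v 3 * v 1 * (pd 2 (pd 2 p) v * pd 1 q v + pd 2 p v * pd 1 (pd 2 q) v - pd 1 (pd 2 p) v * pd 2 q v - pd 1 p v * pd 2 (pd 2 q) v)
      - α * (v 0) * (pd 3 p v * pd 0 q v - pd 0 p v * pd 3 q v)
      - α * v 2 * v 0 * (pd 2 (pd 3 p) v * pd 0 q v + pd 3 p v * pd 0 (pd 2 q) v - pd 0 (pd 2 p) v * pd 3 q v - pd 0 p v * pd 2 (pd 3 q) v)
      + α * (v 1) * (pd 3 p v * pd 1 q v - pd 1 p v * pd 3 q v)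
      + α * v 2 * v 1 * (pd 2 (pd 3 p) v * pd 1 q v + pd 3 p v * pd 1 (pd 2 q) v - pd 1 (pd 2 p) v * pd 3 q v - pd 1 p v * pd 2 (pd 3 q) v)
      + γ * (v 1 * v 1 - v 0 * v 0) * (pd 2 (pd 2 p) v * pd 3 q v + pd 2 p v * pd 2 (pd 3 q) v - pd 2 (pd 3 p) v * pd 2 q v - pd 3 p v * pd 2 (pd 2 q) v) := by
  rw [pd_ssBr α β γ hp hq 2 v]
  simp only [Fin.reduceEq, reduceIte, reduceCtorEq, if_true, if_false, pd_comm hp 1 0 v, pd_comm hp 2 0 v, pd_comm hp 3 0 v,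
    pd_comm hp 2 1 v, pd_comm hp 3 1 v, pd_comm hp 3 2 v,
    pd_comm hq 1 0 v, pd_comm hq 2 0 v, pd_comm hq 3 0 v,
    pd_comm hq 2 1 v, pd_comm hq 3 1 v, pd_comm hq 3 2 v]
  ring

lemma pd_ssBr3 (α β γ : ℝ) {p q : (Fin 4 → ℝ) → ℝ} (hp : ContDiff ℝ (⊤ : ℕ∞) p)
    (hq : ContDiff ℝ (⊤ : ℕ∞) q) (v : Fin 4 → ℝ) :
    pd 3 (ssBr α β γ p q) v =
      β * (v 0) * (pd 2 p v * pd 0 q v - pd 0 p v * pd 2 q v)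
      + β * v 3 * v 0 * (pd 2 (pd 3 p) v * pd 0 q v + pd 2 p v * pd 0 (pd 3 q) v - pd 0 (pd 3 p) v * pd 2 q v - pd 0 p v * pd 2 (pd 3 q) v)
      - β * (v 1) * (pd 2 p v * pd 1 q v - pd 1 p v * pd 2 q v)
      - β * v 3 * v 1 * (pd 2 (pd 3 p) v * pd 1 q v + pd 2 p v * pd 1 (pd 3 q) v - pd 1 (pd 3 p) v * pd 2 q v - pd 1 p v * pd 2 (pd 3 q) v)
      - α * v 2 * v 0 * (pd 3 (pd 3 p) v * pd 0 q v + pd 3 p v * pd 0 (pd 3 q) v - pd 0 (pd 3 p) v * pd 3 q v - pd 0 p v * pd 3 (pd 3 q) v)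
      + α * v 2 * v 1 * (pd 3 (pd 3 p) v * pd 1 q v + pd 3 p v * pd 1 (pd 3 q) v - pd 1 (pd 3 p) v * pd 3 q v - pd 1 p v * pd 3 (pd 3 q) v)
      + γ * (v 1 * v 1 - v 0 * v 0) * (pd 2 (pd 3 p) v * pd 3 q v + pd 2 p v * pd 3 (pd 3 q) v - pd 3 (pd 3 p) v * pd 2 q v - pd 3 p v * pd 2 (pd 3 q) v) := by
  rw [pd_ssBr α β γ hp hq 3 v]
  simp only [Fin.reduceEq, reduceIte, reduceCtorEq, if_true, if_false, pd_comm hp 1 0 v, pd_comm hp 2 0 v, pd_comm hp 3 0 v,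
    pd_comm hp 2 1 v, pd_comm hp 3 1 v, pd_comm hp 3 2 v,
    pd_comm hq 1 0 v, pd_comm hq 2 0 v, pd_comm hq 3 0 v,
    pd_comm hq 2 1 v, pd_comm hq 3 1 v, pd_comm hq 3 2 v]
  ring

set_option maxHeartbeats 4000000 in

set_option maxHeartbeats 4000000 in
/-- The bracket `{·,·}_{**}` satisfies the Jacobi identity, hence is a Poisson
bracket. -/
theorem ss_bracket_jacobi (α β γ : ℝ) :
    ∀ f g h : (Fin 4 → ℝ) → ℝ, ContDiff ℝ (⊤ : ℕ∞) f → ContDiff ℝ (⊤ : ℕ∞) g → ContDiff ℝ (⊤ : ℕ∞) h →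
      ssBr α β γ f (ssBr α β γ g h)
      + ssBr α β γ g (ssBr α β γ h f)
      + ssBr α β γ h (ssBr α β γ f g) = 0 := by
  intro f g h hf hg hh
  funext v
  show ssBr α β γ f (ssBr α β γ g h) v + ssBr α β γ g (ssBr α β γ h f) v
      + ssBr α β γ h (ssBr α β γ f g) v = 0
  simp only [ssBr, pd_ssBr0 α β γ, pd_ssBr1 α β γ, pd_ssBr2 α β γ, pd_ssBr3 α β γ,
    hg, hh, hf]
  ring
end

section
/- For all real parameters α, β, γ, the matrix multiplication map Ψ: ℝ⁴ × ℝ⁴ → ℝ⁴, Ψ((a₁,b₁,x₁,y₁),(a₂,b₂,x₂,y₂)) = (a₁a₂, b₁b₂, a₁x₂ + x₁b₂, a₁y₂ + y₁b₂) (coming from multiplication of the upper triangular matrices [[a, x+iy],[0, b]]), is a Poisson map from the product of two copies of the bracket {·,·}_{**} on ℝ⁴ to {·,·}_{**}: for all smooth f,g: ℝ⁴ → ℝ, {f∘Ψ, g∘Ψ}_{product} = {f,g}_{**} ∘ Ψ. -/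
/-- The product of two copies of `{·,·}_{**}` on `ℝ⁴ × ℝ⁴`:
`{F,G}(u,v) = {F(·,v), G(·,v)}_{**}(u) + {F(u,·), G(u,·)}_{**}(v)`. -/
noncomputable def ssProdBr (α β γ : ℝ) (F G : (Fin 4 → ℝ) × (Fin 4 → ℝ) → ℝ)
    (p : (Fin 4 → ℝ) × (Fin 4 → ℝ)) : ℝ :=
  ssBr α β γ (fun u => F (u, p.2)) (fun u => G (u, p.2)) p.1
  + ssBr α β γ (fun w => F (p.1, w)) (fun w => G (p.1, w)) p.2

/-- Multiplication of the upper triangular matrices `[[a, x+iy],[0, b]]` in the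
coordinates `(a,b,x,y)`:
`Ψ((a₁,b₁,x₁,y₁),(a₂,b₂,x₂,y₂)) = (a₁a₂, b₁b₂, a₁x₂ + x₁b₂, a₁y₂ + y₁b₂)`. -/
def triMul (p : (Fin 4 → ℝ) × (Fin 4 → ℝ)) : Fin 4 → ℝ :=
  ![p.1 0 * p.2 0, p.1 1 * p.2 1,
    p.1 0 * p.2 2 + p.1 2 * p.2 1,
    p.1 0 * p.2 3 + p.1 3 * p.2 1]

/-- evaluation at coordinate `i` as a continuous linear map -/
noncomputable def evCLM (i : Fin 4) : (Fin 4 → ℝ) →L[ℝ] ℝ := ContinuousLinearMap.proj i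

/-- `u ↦ triMul (u, w)` as a continuous linear map -/
noncomputable def Lleft (w : Fin 4 → ℝ) : (Fin 4 → ℝ) →L[ℝ] (Fin 4 → ℝ) :=
  ContinuousLinearMap.pi
    ![w 0 • evCLM 0, w 1 • evCLM 1, w 2 • evCLM 0 + w 1 • evCLM 2,
      w 3 • evCLM 0 + w 1 • evCLM 3]

/-- `w ↦ triMul (u, w)` as a continuous linear map -/
noncomputable def Rright (u : Fin 4 → ℝ) : (Fin 4 → ℝ) →L[ℝ] (Fin 4 → ℝ) :=
  ContinuousLinearMap.pi
    ![u 0 • evCLM 0, u 1 • evCLM 1, u 0 • evCLM 2 + u 2 • evCLM 1,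
      u 0 • evCLM 3 + u 3 • evCLM 1]

lemma Lleft_apply (w u : Fin 4 → ℝ) : Lleft w u = triMul (u, w) := by
  funext j
  fin_cases j <;>
    simp [Lleft, evCLM, triMul, ContinuousLinearMap.pi_apply, mul_comm]

lemma Rright_apply (u w : Fin 4 → ℝ) : Rright u w = triMul (u, w) := by
  funext j
  fin_cases j <;>
    simp [Rright, evCLM, triMul, ContinuousLinearMap.pi_apply, mul_comm]

lemma clm_apply_fin4 (φ : (Fin 4 → ℝ) →L[ℝ] ℝ) (v : Fin 4 → ℝ) :
    φ v = v 0 * φ (Pi.single 0 1) + v 1 * φ (Pi.single 1 1)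
      + v 2 * φ (Pi.single 2 1) + v 3 * φ (Pi.single 3 1) := by
  have hv : v = v 0 • (Pi.single 0 1 : Fin 4 → ℝ) + v 1 • (Pi.single 1 1 : Fin 4 → ℝ)
      + v 2 • (Pi.single 2 1 : Fin 4 → ℝ) + v 3 • (Pi.single 3 1 : Fin 4 → ℝ) := by
    funext j
    fin_cases j <;> simp [Pi.single_apply]
  conv_lhs => rw [hv]
  simp [map_add, map_smul, smul_eq_mul]

lemma pd_comp (f : (Fin 4 → ℝ) → ℝ) (hf : ContDiff ℝ (⊤ : ℕ∞) f)
    (L : (Fin 4 → ℝ) →L[ℝ] (Fin 4 → ℝ)) (i : Fin 4) (v : Fin 4 → ℝ) :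
    pd i (fun u => f (L u)) v =
      (L (Pi.single i 1)) 0 * pd 0 f (L v) + (L (Pi.single i 1)) 1 * pd 1 f (L v)
      + (L (Pi.single i 1)) 2 * pd 2 f (L v) + (L (Pi.single i 1)) 3 * pd 3 f (L v) := by
  have h1 : pd i (fun u => f (L u)) v = fderiv ℝ f (L v) (L (Pi.single i 1)) := by
    unfold pd
    have h := (((hf.differentiable (by simp)) (L v)).hasFDerivAt).comp v L.hasFDerivAt
    have h' : HasFDerivAt (fun u => f (L u)) ((fderiv ℝ f (L v)).comp L) v := h
    rw [h'.fderiv]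
    rfl
  rw [h1, clm_apply_fin4]
  rfl


lemma L0 (w : Fin 4 → ℝ) : Lleft w (Pi.single 0 1) = ![w 0, 0, w 2, w 3] := by
  funext j; fin_cases j <;> simp [Lleft, evCLM, ContinuousLinearMap.pi_apply]
lemma L1 (w : Fin 4 → ℝ) : Lleft w (Pi.single 1 1) = ![0, w 1, 0, 0] := by
  funext j; fin_cases j <;> simp [Lleft, evCLM, ContinuousLinearMap.pi_apply]
lemma L2 (w : Fin 4 → ℝ) : Lleft w (Pi.single 2 1) = ![0, 0, w 1, 0] := by
  funext j; fin_cases j <;> simp [Lleft, evCLM, ContinuousLinearMap.pi_apply]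
lemma L3 (w : Fin 4 → ℝ) : Lleft w (Pi.single 3 1) = ![0, 0, 0, w 1] := by
  funext j; fin_cases j <;> simp [Lleft, evCLM, ContinuousLinearMap.pi_apply]
lemma R0 (u : Fin 4 → ℝ) : Rright u (Pi.single 0 1) = ![u 0, 0, 0, 0] := by
  funext j; fin_cases j <;> simp [Rright, evCLM, ContinuousLinearMap.pi_apply]
lemma R1 (u : Fin 4 → ℝ) : Rright u (Pi.single 1 1) = ![0, u 1, u 2, u 3] := by
  funext j; fin_cases j <;> simp [Rright, evCLM, ContinuousLinearMap.pi_apply]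
lemma R2 (u : Fin 4 → ℝ) : Rright u (Pi.single 2 1) = ![0, 0, u 0, 0] := by
  funext j; fin_cases j <;> simp [Rright, evCLM, ContinuousLinearMap.pi_apply]
lemma R3 (u : Fin 4 → ℝ) : Rright u (Pi.single 3 1) = ![0, 0, 0, u 0] := by
  funext j; fin_cases j <;> simp [Rright, evCLM, ContinuousLinearMap.pi_apply]

section pdlemmas
variable (f : (Fin 4 → ℝ) → ℝ) (hf : ContDiff ℝ (⊤ : ℕ∞) f) (u w v : Fin 4 → ℝ)
include hf

lemma pdL0 : pd 0 (fun u => f (Lleft w u)) v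
    = w 0 * pd 0 f (triMul (v, w)) + w 2 * pd 2 f (triMul (v, w))
      + w 3 * pd 3 f (triMul (v, w)) := by
  rw [pd_comp f hf, L0, Lleft_apply]; simp [Fin.isValue]
lemma pdL1 : pd 1 (fun u => f (Lleft w u)) v = w 1 * pd 1 f (triMul (v, w)) := by
  rw [pd_comp f hf, L1, Lleft_apply]; simp [Fin.isValue]
lemma pdL2 : pd 2 (fun u => f (Lleft w u)) v = w 1 * pd 2 f (triMul (v, w)) := by
  rw [pd_comp f hf, L2, Lleft_apply]; simp [Fin.isValue]
lemma pdL3 : pd 3 (fun u => f (Lleft w u)) v = w 1 * pd 3 f (triMul (v, w)) := by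
  rw [pd_comp f hf, L3, Lleft_apply]; simp [Fin.isValue]
lemma pdR0 : pd 0 (fun w => f (Rright u w)) v = u 0 * pd 0 f (triMul (u, v)) := by
  rw [pd_comp f hf, R0, Rright_apply]; simp [Fin.isValue]
lemma pdR1 : pd 1 (fun w => f (Rright u w)) v
    = u 1 * pd 1 f (triMul (u, v)) + u 2 * pd 2 f (triMul (u, v))
      + u 3 * pd 3 f (triMul (u, v)) := by
  rw [pd_comp f hf, R1, Rright_apply]; simp [Fin.isValue]
lemma pdR2 : pd 2 (fun w => f (Rright u w)) v = u 0 * pd 2 f (triMul (u, v)) := by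
  rw [pd_comp f hf, R2, Rright_apply]; simp [Fin.isValue]
lemma pdR3 : pd 3 (fun w => f (Rright u w)) v = u 0 * pd 3 f (triMul (u, v)) := by
  rw [pd_comp f hf, R3, Rright_apply]; simp [Fin.isValue]

end pdlemmas

set_option maxHeartbeats 1000000 in
/-- Matrix multiplication is a Poisson map from the product of two copies of
`{·,·}_{**}` to `{·,·}_{**}`. -/
theorem tri_multiplication_is_poisson (α β γ : ℝ) :
    ∀ f g : (Fin 4 → ℝ) → ℝ, ContDiff ℝ (⊤ : ℕ∞) f → ContDiff ℝ (⊤ : ℕ∞) g →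
      ssProdBr α β γ (fun p => f (triMul p)) (fun p => g (triMul p)) =
        fun p => ssBr α β γ f g (triMul p) := by
  intro f g hf hg
  funext p
  obtain ⟨u, w⟩ := p
  have e1 : (fun u' => f (triMul (u', w))) = fun u' => f (Lleft w u') := by
    funext u'; rw [Lleft_apply]
  have e2 : (fun u' => g (triMul (u', w))) = fun u' => g (Lleft w u') := by
    funext u'; rw [Lleft_apply]
  have e3 : (fun w' => f (triMul (u, w'))) = fun w' => f (Rright u w') := by
    funext w'; rw [Rright_apply]
  have e4 : (fun w' => g (triMul (u, w'))) = fun w' => g (Rright u w') := by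
    funext w'; rw [Rright_apply]
  simp only [ssProdBr, ssBr, e1, e2, e3, e4,
    pdL0 f hf, pdL1 f hf, pdL2 f hf, pdL3 f hf,
    pdR0 f hf, pdR1 f hf, pdR2 f hf, pdR3 f hf,
    pdL0 g hg, pdL1 g hg, pdL2 g hg, pdL3 g hg,
    pdR0 g hg, pdR1 g hg, pdR2 g hg, pdR3 g hg]
  have m0 : triMul (u, w) 0 = u 0 * w 0 := rfl
  have m1 : triMul (u, w) 1 = u 1 * w 1 := rfl
  have m2 : triMul (u, w) 2 = u 0 * w 2 + u 2 * w 1 := rfl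
  have m3 : triMul (u, w) 3 = u 0 * w 3 + u 3 * w 1 := rfl
  rw [m0, m1, m2, m3]
  ring
end
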